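/- arXiv:2605.27756 — 3 statements merged into one kernel-verified Lean document; each statement's English description precedes it below -/
import Mathlib

section
/- Let τ > 0, M > 0, ω̃ ∈ R, w̃ ∈ R^{p_1}. The point (0, 0) minimizes f(ω, w) = ½(ω − ω̃)² + ½||w − w̃||² + τ|ω| over the constraint set C = {(ω, w) : ||w||_∞ ≤ M|ω|} if and only if |ω̃| + M·||w̃||₁ ≤ τ. -/
set_option maxHeartbeats 800000

private noncomputable def sgn10 (x : ℝ) : ℝ := if 0 ≤ x then 1 else -1

private lemma sgn10_mul (x : ℝ) : sgn10 x * x = |x| := by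
  by_cases hx : 0 ≤ x
  · simp [sgn10, hx, abs_of_nonneg hx]
  · simp [sgn10, hx, abs_of_neg (lt_of_not_ge hx)]

private lemma sgn10_abs (x : ℝ) : |sgn10 x| = 1 := by
  by_cases hx : 0 ≤ x <;> simp [sgn10, hx]

private lemma sgn10_sq (x : ℝ) : sgn10 x ^ 2 = 1 := by
  rw [← sq_abs, sgn10_abs, one_pow]

/-- Zero-attractor characterization of Hier-Prox: `(0, 0)` minimizes
`f(ω, w) = ½(ω − ω̃)² + ½‖w − w̃‖² + τ|ω|` over `C = {(ω,w) : ‖w‖_∞ ≤ M|ω|}`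
iff `|ω̃| + M‖w̃‖₁ ≤ τ`. -/
theorem stmt10 (p₁ : ℕ) (τ M : ℝ) (hτ : 0 < τ) (hM : 0 < M)
    (ωt : ℝ) (wt : Fin p₁ → ℝ)
    (f : ℝ → (Fin p₁ → ℝ) → ℝ)
    (hf : ∀ ω w, f ω w = (1/2) * (ω - ωt)^2 + (1/2) * ∑ k, (w k - wt k)^2 + τ * |ω|) :
    (∀ (ω : ℝ) (w : Fin p₁ → ℝ), ‖w‖ ≤ M * |ω| → f 0 0 ≤ f ω w) ↔
      |ωt| + M * ∑ k, |wt k| ≤ τ := by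
  have hS0 : 0 ≤ ∑ k, |wt k| := Finset.sum_nonneg fun k _ => abs_nonneg _
  constructor
  · intro h
    by_contra hcon
    push_neg at hcon
    have hδ0 : 0 < |ωt| + M * ∑ k, |wt k| - τ := by linarith
    have hden : (0:ℝ) < 1 + (p₁:ℝ) * M ^ 2 := by positivity
    obtain ⟨t, ht⟩ : ∃ t : ℝ, t = (|ωt| + M * ∑ k, |wt k| - τ) / (1 + (p₁:ℝ) * M ^ 2) :=
      ⟨_, rfl⟩
    have ht0 : 0 < t := ht ▸ div_pos hδ0 hden
    have hωabs : |t * sgn10 ωt| = t := by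
      rw [abs_mul, sgn10_abs, abs_of_pos ht0, mul_one]
    have hfeas : ‖(fun k => M * t * sgn10 (wt k) : Fin p₁ → ℝ)‖ ≤ M * |t * sgn10 ωt| := by
      rw [hωabs]
      refine (pi_norm_le_iff_of_nonneg (by positivity)).2 fun k => ?_
      simp only [Real.norm_eq_abs, abs_mul, sgn10_abs, mul_one,
        abs_of_pos hM, abs_of_pos ht0, le_refl]
    have key := h (t * sgn10 ωt) (fun k => M * t * sgn10 (wt k)) hfeas
    rw [hf, hf] at key
    have h1 : (t * sgn10 ωt - ωt) ^ 2 = t ^ 2 - 2 * (t * |ωt|) + ωt ^ 2 := by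
      have e1 : t * sgn10 ωt * ωt = t * |ωt| := by rw [mul_assoc, sgn10_mul]
      have e2 : (t * sgn10 ωt) ^ 2 = t ^ 2 := by rw [mul_pow, sgn10_sq, mul_one]
      nlinarith [e1, e2]
    have h2 : ∑ k, (M * t * sgn10 (wt k) - wt k) ^ 2
        = (p₁:ℝ) * (M ^ 2 * t ^ 2) - 2 * (M * t * ∑ k, |wt k|) + ∑ k, wt k ^ 2 := by
      have e : ∀ k : Fin p₁, (M * t * sgn10 (wt k) - wt k) ^ 2
          = M ^ 2 * t ^ 2 - 2 * (M * t * |wt k|) + wt k ^ 2 := by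
        intro k
        have e1 : M * t * sgn10 (wt k) * wt k = M * t * |wt k| := by
          rw [mul_assoc, sgn10_mul]
        have e2 : (M * t * sgn10 (wt k)) ^ 2 = M ^ 2 * t ^ 2 := by
          rw [mul_pow, mul_pow, sgn10_sq, mul_one]
        nlinarith [e1, e2]
      rw [Finset.sum_congr rfl fun k _ => e k]
      rw [Finset.sum_add_distrib, Finset.sum_sub_distrib, Finset.sum_const,
        Finset.card_univ, Fintype.card_fin, nsmul_eq_mul]
      have : ∑ k, 2 * (M * t * |wt k|) = 2 * (M * t * ∑ k, |wt k|) := by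
        simp only [Finset.mul_sum]
      rw [this]
    rw [h1, h2, hωabs] at key
    simp only [zero_sub, Pi.zero_apply, neg_sq, abs_zero, mul_zero, add_zero] at key
    have hteq : t * (1 + (p₁:ℝ) * M ^ 2) = |ωt| + M * ∑ k, |wt k| - τ := by
      rw [ht, div_mul_cancel₀ _ (ne_of_gt hden)]
    nlinarith [key, ht0, hδ0, hteq]
  · intro h ω w hfeas
    have hwk : ∀ k, |w k| ≤ M * |ω| := fun k => by
      calc |w k| = ‖w k‖ := (Real.norm_eq_abs _).symm
        _ ≤ ‖w‖ := norm_le_pi_norm w k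
        _ ≤ M * |ω| := hfeas
    rw [hf, hf]
    simp only [zero_sub, Pi.zero_apply, neg_sq, abs_zero, mul_zero, add_zero]
    have hsum : ∑ k, (w k - wt k) ^ 2 - ∑ k, wt k ^ 2
        = ∑ k, (w k ^ 2 - 2 * (w k * wt k)) := by
      rw [← Finset.sum_sub_distrib]
      exact Finset.sum_congr rfl fun k _ => by ring
    have hterm : ∀ k ∈ Finset.univ, (-2 * (M * |ω|)) * |wt k| ≤ w k ^ 2 - 2 * (w k * wt k) := by
      intro k _
      have h1 : w k * wt k ≤ |w k| * |wt k| := by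
        calc w k * wt k ≤ |w k * wt k| := le_abs_self _
          _ = |w k| * |wt k| := abs_mul _ _
      have h2 : |w k| * |wt k| ≤ M * |ω| * |wt k| :=
        mul_le_mul_of_nonneg_right (hwk k) (abs_nonneg _)
      nlinarith [sq_nonneg (w k)]
    have hsum2 : (-2 * (M * |ω|)) * ∑ k, |wt k| ≤ ∑ k, (w k ^ 2 - 2 * (w k * wt k)) := by
      rw [Finset.mul_sum]
      exact Finset.sum_le_sum hterm
    have hωωt : ω * ωt ≤ |ω| * |ωt| := by
      calc ω * ωt ≤ |ω * ωt| := le_abs_self _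
        _ = |ω| * |ωt| := abs_mul _ _
    nlinarith [hsum, hsum2, hωωt, abs_nonneg ω, sq_nonneg ω,
      mul_le_mul_of_nonneg_left h (abs_nonneg ω)]
end

section
/- Let τ > 0, M > 0, ω̃ ∈ R, w̃ ∈ R^{p_1} with |ω̃| + M||w̃||₁ ≤ τ. Then for every (ω, w) with ||w||_∞ ≤ M|ω|, one has ½(ω − ω̃)² + ½||w − w̃||² + τ|ω| ≥ ½ω̃² + ½||w̃||². -/
/-- 'If' direction of the zero-attractor condition: under the threshold
condition, `(0,0)` is a global minimizer over the hierarchical cone. -/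
theorem stmt11 (p₁ : ℕ) (τ M : ℝ) (hτ : 0 < τ) (hM : 0 < M)
    (ωt : ℝ) (wt : Fin p₁ → ℝ)
    (hthr : |ωt| + M * ∑ k, |wt k| ≤ τ) :
    ∀ (ω : ℝ) (w : Fin p₁ → ℝ), ‖w‖ ≤ M * |ω| →
      (1/2) * (ω - ωt)^2 + (1/2) * ∑ k, (w k - wt k)^2 + τ * |ω| ≥
        (1/2) * ωt^2 + (1/2) * ∑ k, (wt k)^2 := by
  intro ω w hw
  have hS : ∑ k, w k * wt k ≤ ‖w‖ * ∑ k, |wt k| := by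
    rw [Finset.mul_sum]
    apply Finset.sum_le_sum
    intro k _
    calc w k * wt k ≤ |w k * wt k| := le_abs_self _
      _ = |w k| * |wt k| := abs_mul _ _
      _ ≤ ‖w‖ * |wt k| := by
          apply mul_le_mul_of_nonneg_right _ (abs_nonneg _)
          have := norm_le_pi_norm w k
          simpa [Real.norm_eq_abs] using this
  have hSnn : (0:ℝ) ≤ ∑ k, |wt k| := Finset.sum_nonneg fun k _ => abs_nonneg _
  have hS2 : ∑ k, w k * wt k ≤ M * |ω| * ∑ k, |wt k| :=
    hS.trans (mul_le_mul_of_nonneg_right hw hSnn)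
  have hexp : ∑ k, (w k - wt k)^2 =
      ∑ k, (w k)^2 - 2 * ∑ k, w k * wt k + ∑ k, (wt k)^2 := by
    simp only [sub_sq]
    rw [Finset.sum_add_distrib, Finset.sum_sub_distrib, Finset.mul_sum]
    ring_nf
  have hwsq : (0:ℝ) ≤ ∑ k, (w k)^2 := Finset.sum_nonneg fun k _ => sq_nonneg _
  have h1 : ω * ωt ≤ |ω| * |ωt| := by rw [← abs_mul]; exact le_abs_self _
  have h2 : (|ωt| + M * ∑ k, |wt k|) * |ω| ≤ τ * |ω| :=
    mul_le_mul_of_nonneg_right hthr (abs_nonneg _)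
  rw [hexp]
  nlinarith [sq_abs ω, sq_nonneg ω, abs_nonneg ω]
end

section
/- Let τ > 0, M > 0, ω̃ ∈ R, w̃ ∈ R^{p_1}, and suppose |ω̃| + M||w̃||₁ > τ. Then (0, 0) does not minimize f(ω, w) = ½(ω − ω̃)² + ½||w − w̃||² + τ|ω| over C = {(ω, w) : ||w||_∞ ≤ M|ω|}; that is, there exists (ω, w) ∈ C with f(ω, w) < f(0, 0). -/
/-- 'Only if' direction of the zero-attractor condition: if the threshold
condition fails, `(0, 0)` does not minimize the Hier-Prox objective over `C`. -/
theorem stmt12 (p₁ : ℕ) (τ M : ℝ) (hτ : 0 < τ) (hM : 0 < M)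
    (ωt : ℝ) (wt : Fin p₁ → ℝ)
    (hthr : |ωt| + M * ∑ k, |wt k| > τ)
    (f : ℝ → (Fin p₁ → ℝ) → ℝ)
    (hf : ∀ ω w, f ω w = (1/2) * (ω - ωt)^2 + (1/2) * ∑ k, (w k - wt k)^2 + τ * |ω|) :
    ∃ (ω : ℝ) (w : Fin p₁ → ℝ), ‖w‖ ≤ M * |ω| ∧ f ω w < f 0 0 := by
  set S : ℝ := ∑ k, |wt k| with hS
  set δ : ℝ := |ωt| + M * S - τ with hδdef
  have hδ : 0 < δ := by simp only [hδdef]; linarith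
  set A : ℝ := 1 + (p₁ : ℝ) * M ^ 2 with hAdef
  have hA : 0 < A := by positivity
  set t : ℝ := δ / A with htdef
  have ht : 0 < t := div_pos hδ hA
  have htA : t * A = δ := by
    rw [htdef]; field_simp
  clear_value t
  clear htdef
  set s : ℝ := if 0 ≤ ωt then 1 else -1 with hsdef
  have hs_abs : |s| = 1 := by
    simp only [hsdef]; split <;> simp
  have hs_sq : s ^ 2 = 1 := by simp only [hsdef]; split <;> norm_num
  have hs_mul : s * ωt = |ωt| := by
    simp only [hsdef]; split
    · rw [abs_of_nonneg ‹_›]; ring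
    · rw [abs_of_neg (lt_of_not_ge ‹_›)]; ring
  clear_value s
  clear hsdef
  set sk : Fin p₁ → ℝ := fun k => if 0 ≤ wt k then 1 else -1 with hskdef
  have hsk_abs : ∀ k, |sk k| = 1 := by
    intro k; simp only [hskdef]; split <;> simp
  have hsk_sq : ∀ k, sk k ^ 2 = 1 := by
    intro k; simp only [hskdef]; split <;> norm_num
  have hsk_mul : ∀ k, sk k * wt k = |wt k| := by
    intro k; simp only [hskdef]; split
    · rw [abs_of_nonneg ‹_›]; ring
    · rw [abs_of_neg (lt_of_not_ge ‹_›)]; ring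
  clear_value sk
  clear hskdef
  refine ⟨t * s, fun k => t * M * sk k, ?_, ?_⟩
  · have habs : |t * s| = t := by
      rw [abs_mul, hs_abs, abs_of_pos ht, mul_one]
    rw [habs]
    have hMt : 0 ≤ M * t := by positivity
    apply pi_norm_le_iff_of_nonneg hMt |>.2
    intro k
    have h1 : ‖t * M * sk k‖ = t * M * |sk k| := by
      rw [Real.norm_eq_abs, abs_mul, abs_mul, abs_of_pos ht, abs_of_pos hM]
    rw [h1, hsk_abs k]; nlinarith
  · rw [hf, hf]
    have habs : |t * s| = t := by
      rw [abs_mul, hs_abs, abs_of_pos ht, mul_one]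
    rw [habs, abs_zero]
    have hsum1 : ∑ k, ((fun k => t * M * sk k) k - wt k) ^ 2
        = (p₁ : ℝ) * (t * M) ^ 2 - 2 * t * M * S + ∑ k, wt k ^ 2 := by
      have heach : ∀ k, (t * M * sk k - wt k) ^ 2
          = (t * M) ^ 2 - 2 * t * M * |wt k| + wt k ^ 2 := by
        intro k
        have hexp : (t * M * sk k - wt k) ^ 2
            = (t * M) ^ 2 * sk k ^ 2 - 2 * t * M * (sk k * wt k) + wt k ^ 2 := by
          ring
        rw [hexp, hsk_sq k, hsk_mul k, mul_one]
      simp only [heach]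
      rw [Finset.sum_add_distrib, Finset.sum_sub_distrib, Finset.sum_const,
        ← Finset.mul_sum, ← hS]
      simp
    rw [hsum1]
    have hsum0 : ∑ k, ((0 : Fin p₁ → ℝ) k - wt k) ^ 2 = ∑ k, wt k ^ 2 := by
      apply Finset.sum_congr rfl; intro k _; simp
    rw [hsum0]
    have hexp : (t * s - ωt) ^ 2 = t ^ 2 - 2 * t * |ωt| + ωt ^ 2 := by
      have h : (t * s - ωt) ^ 2 = t ^ 2 * s ^ 2 - 2 * t * (s * ωt) + ωt ^ 2 := by ring
      rw [h, hs_sq, hs_mul, mul_one]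
    rw [hexp]
    have key : t ^ 2 * A = t * δ := by
      nlinarith [htA]
    rw [hAdef] at key
    rw [hδdef] at key
    nlinarith [mul_pos ht hδ, hδdef]
end
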